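/- Let D be a division ring and let n ≥ 2. Let b(i,j) ∈ D be given for row indices i ∈ {1,…,n} and column indices j ∈ {0,1,…,n}, with entries from different rows commuting: b(i,j)·b(k,l) = b(k,l)·b(i,j) whenever i ≠ k. For each i ∈ {0,…,n} let M^i be the Cartier–Foata determinant of the n×n matrix obtained by deleting column i. If M^0 ≠ 0, then for all i,j ∈ {0,…,n} the triangle relation M^i·(M^0)^{-1}·M^j = M^j·(M^0)^{-1}·M^i holds. -/

import Mathlib

/-- The Cartier–Foata determinant of the `n × n` matrix obtained from the
`n × (n+1)` matrix `b` by deleting column `i`: the sum over all permutations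
`σ` of `Fin n` (which parametrize, via the order-preserving identification
`i.succAbove`, the bijections from rows to the columns `≠ i`) of the signed
ordered product of entries, one from each row in increasing row order. -/
noncomputable def cartierFoataDet {D : Type*} [Ring D] {n : ℕ}
    (b : Fin n → Fin (n + 1) → D) (i : Fin (n + 1)) : D :=
  ∑ σ : Equiv.Perm (Fin n),
    ((Equiv.Perm.sign σ : ℤ) : D) *
      (List.ofFn fun r : Fin n => b r (i.succAbove (σ r))).prod


open Equiv Finset

section Lists

/-- Extract the `k`-th element of a list to the right end, provided it commutes with
all later elements. -/
theorem list_prod_eq_eraseIdx_mul {M : Type*} [Monoid M] :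
    ∀ (L : List M) (k : ℕ) (hk : k < L.length),
      (∀ j (hj : j < L.length), k < j → Commute L[k] L[j]) →
      L.prod = (L.eraseIdx k).prod * L[k]
  | [], k, hk, _ => by simp at hk
  | a :: t, 0, hk, h => by
      simp only [List.prod_cons, List.eraseIdx_cons_zero]
      have : Commute a t.prod := by
        refine Commute.list_prod_right _ _ ?_
        intro x hx
        obtain ⟨j, hj, rfl⟩ := List.mem_iff_getElem.mp hx
        exact h (j+1) (by simpa using hj) (Nat.succ_pos j)
      simpa using this.eq
  | a :: t, k+1, hk, h => by
      have hk' : k < t.length := by simpa using hk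
      have ih := list_prod_eq_eraseIdx_mul t k hk' (fun j hj hkj => by
        exact h (j+1) (by simpa using hj) (by omega))
      simp only [List.prod_cons, List.eraseIdx_cons_succ]
      rw [ih]
      simp [mul_assoc]

theorem eraseIdx_ofFn_congr {M : Type*} {n : ℕ} (f g : Fin n → M) (k : Fin n)
    (h : ∀ r : Fin n, r ≠ k → f r = g r) :
    (List.ofFn f).eraseIdx k = (List.ofFn g).eraseIdx k := by
  apply List.ext_getElem
  · rw [List.length_eraseIdx, List.length_eraseIdx]; simp
  · intro i h1 h2
    rw [List.getElem_eraseIdx, List.getElem_eraseIdx]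
    have hlen : i + 1 < n := by
      have := h1
      simp [List.length_eraseIdx, List.length_ofFn] at this
      omega
    split
    · next hik =>
      rw [List.getElem_ofFn, List.getElem_ofFn]
      exact h _ (by simp only [ne_eq, Fin.ext_iff]; simpa using Nat.ne_of_lt hik)
    · next hik =>
      rw [List.getElem_ofFn, List.getElem_ofFn]
      exact h _ (by simp only [ne_eq, Fin.ext_iff]; omega)

end Lists

section Det

variable {D : Type*} [Ring D] {n : ℕ} (b : Fin n → Fin (n + 1) → D)

/-- The monomial: product over rows `r` (in increasing order) of `b r (g r)`. -/
def cfMonomial (g : Fin n → Fin (n + 1)) : D :=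
  (List.ofFn fun r : Fin n => b r (g r)).prod

/-- Generalized Cartier–Foata determinant with column assignment `c`. -/
noncomputable def cfDet (c : Fin n → Fin (n + 1)) : D :=
  ∑ σ : Equiv.Perm (Fin n), ((Equiv.Perm.sign σ : ℤ) : D) * cfMonomial b (c ∘ σ)

theorem signD_mul {m : ℕ} (σ τ : Equiv.Perm (Fin m)) :
    ((Equiv.Perm.sign (σ * τ) : ℤ) : D)
      = ((Equiv.Perm.sign σ : ℤ) : D) * ((Equiv.Perm.sign τ : ℤ) : D) := by
  rw [map_mul, Units.val_mul, Int.cast_mul]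

theorem signD_sq {m : ℕ} (σ : Equiv.Perm (Fin m)) :
    ((Equiv.Perm.sign σ : ℤ) : D) * ((Equiv.Perm.sign σ : ℤ) : D) = 1 := by
  rcases Int.units_eq_one_or (Equiv.Perm.sign σ) with h | h <;> simp [h]

theorem cfDet_comp_perm (c : Fin n → Fin (n + 1)) (e : Equiv.Perm (Fin n)) :
    cfDet b (c ∘ e) = ((Equiv.Perm.sign e : ℤ) : D) * cfDet b c := by
  unfold cfDet
  rw [Finset.mul_sum]
  apply Fintype.sum_bijective (fun σ : Equiv.Perm (Fin n) => e * σ)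
    (Group.mulLeft_bijective e)
  intro σ
  have h1 : c ∘ ⇑(e * σ) = (c ∘ ⇑e) ∘ ⇑σ := by
    funext r; simp [Equiv.Perm.mul_apply]
  rw [h1, signD_mul, ← mul_assoc, ← mul_assoc, signD_sq, one_mul]

theorem cfDet_eq_zero_of_repeat (c : Fin n → Fin (n + 1)) (p q : Fin n) (hpq : p ≠ q)
    (hc : c p = c q) : cfDet b c = 0 := by
  unfold cfDet
  apply Finset.sum_ninvolution (fun σ => Equiv.swap p q * σ)
  · intro σ
    have h1 : c ∘ ⇑(Equiv.swap p q * σ) = c ∘ ⇑σ := by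
      funext r
      simp only [Function.comp_apply, Equiv.Perm.mul_apply]
      rcases eq_or_ne (σ r) p with h | h
      · rw [h, Equiv.swap_apply_left, ← hc]
      rcases eq_or_ne (σ r) q with h' | h'
      · rw [h', Equiv.swap_apply_right, hc]
      · rw [Equiv.swap_apply_of_ne_of_ne h h']
    have h2 : ((Equiv.Perm.sign (Equiv.swap p q * σ) : ℤ) : D)
        = -((Equiv.Perm.sign σ : ℤ) : D) := by
      rw [signD_mul]
      rw [Equiv.Perm.sign_swap hpq]
      push_cast
      rw [neg_one_mul]
    rw [h1, h2, neg_mul, add_neg_cancel]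
  · intro σ _ h
    exact absurd (congrArg (fun τ : Equiv.Perm (Fin n) => τ (σ⁻¹ p)) h) (by
      simp [Equiv.Perm.mul_apply, Equiv.swap_apply_left, hpq.symm])
  · intro σ; exact Finset.mem_univ _
  · intro σ
    rw [← mul_assoc, Equiv.swap_mul_self, one_mul]

end Det

section DedekindFinite

variable {D : Type*} [DivisionRing D] {n : ℕ}

theorem matrix_mul_eq_one_comm {A B : Matrix (Fin n) (Fin n) D} (h : B * A = 1) :
    A * B = 1 := by
  have hfg : ∀ v : Fin n → D, A.vecMulLinear (B.vecMulLinear v) = v := by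
    intro v
    simp [Matrix.vecMul_vecMul, h, Matrix.vecMul_one]
  have hsurj : Function.Surjective A.vecMulLinear := fun v => ⟨B.vecMulLinear v, hfg v⟩
  have hinj : Function.Injective A.vecMulLinear :=
    LinearMap.injective_iff_surjective.mpr hsurj
  have hgf : ∀ v : Fin n → D, B.vecMulLinear (A.vecMulLinear v) = v := by
    intro v
    apply hinj
    rw [hfg]
  have : ∀ v : Fin n → D, Matrix.vecMul v (A * B) = v := by
    intro v
    have := hgf v
    simpa [Matrix.vecMul_vecMul] using this
  ext r c
  have := congrFun (this (Pi.single r 1)) c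
  rw [Matrix.single_one_vecMul] at this
  change (A * B) r c = _ at this
  rw [this]
  simp [Matrix.one_apply, Pi.single_apply, eq_comm]

end DedekindFinite

section Normalize

variable {D : Type*} [Ring D] {n : ℕ} (b : Fin n → Fin (n + 1) → D)

theorem cfDet_sigma_succ (σ τ : Equiv.Perm (Fin (n + 1))) (h : σ 0 = τ 0) :
    cfDet b (⇑σ ∘ Fin.succ) =
      (((Equiv.Perm.sign σ : ℤ) : D) * ((Equiv.Perm.sign τ : ℤ) : D)) *
        cfDet b (⇑τ ∘ Fin.succ) := by
  set π : Equiv.Perm (Fin (n + 1)) := τ⁻¹ * σ with hπ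
  have hπ0 : π 0 = 0 := by
    simp [hπ, Equiv.Perm.mul_apply, h]
  obtain ⟨⟨p, e⟩, hp⟩ : ∃ pe : Fin (n+1) × Equiv.Perm (Fin n),
      Equiv.Perm.decomposeFin π = pe := ⟨_, rfl⟩
  have hdec0 : π = Equiv.Perm.decomposeFin.symm (p, e) := by
    rw [← hp, Equiv.symm_apply_apply]
  have hp0 : p = 0 := by
    have h1 := Equiv.Perm.decomposeFin_symm_apply_zero p e
    rw [← hdec0] at h1
    rw [← h1, hπ0]
  have hdec : π = Equiv.Perm.decomposeFin.symm (0, e) := by rw [hdec0, hp0]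
  have hsucc : ∀ x : Fin n, π x.succ = (e x).succ := by
    intro x
    rw [hdec, Equiv.Perm.decomposeFin_symm_apply_succ]
    simp
  have hcomp : ⇑σ ∘ Fin.succ = (⇑τ ∘ Fin.succ) ∘ ⇑e := by
    funext x
    have : σ x.succ = τ (π x.succ) := by
      simp [hπ, Equiv.Perm.mul_apply]
    rw [Function.comp_apply, this, hsucc]
    rfl
  have hsign : Equiv.Perm.sign e = Equiv.Perm.sign σ * Equiv.Perm.sign τ := by
    have h2 : Equiv.Perm.sign π = Equiv.Perm.sign e := by
      rw [hdec, Equiv.Perm.decomposeFin.symm_sign, if_pos rfl, one_mul]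
    have h3 : Equiv.Perm.sign π = Equiv.Perm.sign τ * Equiv.Perm.sign σ := by
      rw [hπ, map_mul, Equiv.Perm.sign_inv]
    rw [← h2, h3, mul_comm]
  rw [hcomp, cfDet_comp_perm, hsign]
  rw [Units.val_mul, Int.cast_mul]

/-- Normal form: the generalized determinant along `σ ∘ succ` in terms of the
deleted-column determinants. -/
theorem cfDet_perm_succ (σ : Equiv.Perm (Fin (n + 1))) :
    cfDet b (⇑σ ∘ Fin.succ) =
      ((Equiv.Perm.sign σ : ℤ) : D) * (((-1 : D) ^ ((σ 0 : Fin (n+1)) : ℕ)) *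
        cfDet b (Fin.succAbove (σ 0))) := by
  set l : Fin (n + 1) := σ 0 with hl
  set τ : Equiv.Perm (Fin (n + 1)) := (Fin.cycleRange l)⁻¹ with hτ
  have hτ0 : τ 0 = l := by
    rw [hτ]
    rw [Equiv.Perm.inv_eq_iff_eq]
    exact (Fin.cycleRange_self l).symm
  have hτsucc : ⇑τ ∘ Fin.succ = Fin.succAbove l := by
    funext j
    rw [hτ, Function.comp_apply]
    rw [Equiv.Perm.inv_eq_iff_eq]
    exact (Fin.cycleRange_succAbove l j).symm
  have hsτ : ((Equiv.Perm.sign τ : ℤ) : D) = (-1 : D) ^ (l : ℕ) := by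
    rw [hτ, map_inv, Fin.sign_cycleRange]
    push_cast
    simp
  rw [cfDet_sigma_succ b σ τ (by rw [hτ0, hl]), hτsucc, hsτ, mul_assoc]

end Normalize

section Extraction

variable {D : Type*} [Ring D] {n : ℕ} (b : Fin n → Fin n.succ → D)
variable (hcomm : ∀ i k : Fin n, i ≠ k → ∀ j l : Fin n.succ, b i j * b k l = b k l * b i j)

/-- The cofactor-type coefficient: product over rows other than `e⁻¹ p`. -/
def cfW (c0 : Fin n → Fin n.succ) (p : Fin n) (e : Equiv.Perm (Fin n)) : D :=
  ((List.ofFn fun r : Fin n => b r (c0 (e r))).eraseIdx ((e⁻¹ p : Fin n) : ℕ)).prod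

include hcomm in
theorem cfMonomial_update (c0 : Fin n → Fin n.succ) (p : Fin n) (e : Equiv.Perm (Fin n))
    (l : Fin n.succ) :
    cfMonomial b (Function.update c0 p l ∘ ⇑e) = cfW b c0 p e * b (e⁻¹ p) l := by
  set k : Fin n := e⁻¹ p with hk
  set f : Fin n → D := fun r => b r ((Function.update c0 p l ∘ ⇑e) r) with hf
  have hklen : (k : ℕ) < (List.ofFn f).length := by simp
  have hgetk : (List.ofFn f)[(k : ℕ)] = b k l := by
    rw [List.getElem_ofFn]
    simp only [hf, Function.comp_apply, Fin.eta]
    have : e k = p := by rw [hk]; simp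
    rw [this, Function.update_self]
  have hstep := list_prod_eq_eraseIdx_mul (List.ofFn f) (k : ℕ) hklen ?_
  · have herase : (List.ofFn f).eraseIdx (k : ℕ)
        = (List.ofFn fun r : Fin n => b r (c0 (e r))).eraseIdx (k : ℕ) := by
      apply eraseIdx_ofFn_congr
      intro r hr
      simp only [hf, Function.comp_apply]
      congr 1
      apply Function.update_of_ne
      intro hep
      exact hr (by rw [hk, ← hep]; simp)
    calc cfMonomial b (Function.update c0 p l ∘ ⇑e) = (List.ofFn f).prod := rfl
      _ = ((List.ofFn f).eraseIdx (k : ℕ)).prod * (List.ofFn f)[(k : ℕ)] := hstep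
      _ = cfW b c0 p e * b (e⁻¹ p) l := by rw [hgetk, herase]; rfl
  · intro j hj hkj
    rw [hgetk, List.getElem_ofFn]
    have hne : k ≠ (⟨j, by simpa using hj⟩ : Fin n) := by
      intro hkeq
      have := congrArg Fin.val hkeq
      simp only [] at this
      omega
    exact hcomm _ _ hne _ _

include hcomm in
theorem cfDet_update (c0 : Fin n → Fin n.succ) (p : Fin n) (l : Fin n.succ) :
    cfDet b (Function.update c0 p l) =
      ∑ e : Equiv.Perm (Fin n),
        (((Equiv.Perm.sign e : ℤ) : D) * cfW b c0 p e) * b (e⁻¹ p) l := by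
  unfold cfDet
  apply Finset.sum_congr rfl
  intro e _
  rw [cfMonomial_update b hcomm c0 p e l, mul_assoc]

end Extraction

section Kernel

variable {D : Type*} [DivisionRing D] {n : ℕ} (b : Fin n → Fin (n + 1) → D)
variable (hcomm : ∀ i k : Fin n, i ≠ k → ∀ j l : Fin (n + 1), b i j * b k l = b k l * b i j)

theorem cartierFoataDet_eq (i : Fin (n + 1)) :
    cartierFoataDet b i = cfDet b (Fin.succAbove i) := rfl

theorem neg_one_pow_comm {E : Type*} [Monoid E] [HasDistribNeg E] (a : E) (k : ℕ) :
    (-1 : E) ^ k * a = a * (-1 : E) ^ k := by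
  rcases Nat.even_or_odd k with h | h
  · rw [h.neg_one_pow, one_mul, mul_one]
  · rw [h.neg_one_pow]
    simp

theorem neg_one_pow_mul_self {E : Type*} [Monoid E] [HasDistribNeg E] (k : ℕ) :
    (-1 : E) ^ k * (-1 : E) ^ k = 1 := by
  rw [← pow_add]
  exact Even.neg_one_pow ⟨k, rfl⟩

/-- The matrix of columns `1, …, n` of `b`. -/
def cfA : Matrix (Fin n) (Fin n) D := Matrix.of fun r c => b r (Fin.succ c)

/-- The (left-)cofactor matrix. -/
noncomputable def cfC : Matrix (Fin n) (Fin n) D := Matrix.of fun c w =>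
  ∑ e : Equiv.Perm (Fin n),
    if e w = c then ((Equiv.Perm.sign e : ℤ) : D) * cfW b Fin.succ c e else 0

include hcomm in
theorem cfC_row (c : Fin n) (l : Fin (n + 1)) :
    ∑ w : Fin n, cfC b c w * b w l = cfDet b (Function.update Fin.succ c l) := by
  rw [cfDet_update b hcomm]
  have step1 : ∀ w : Fin n, cfC b c w * b w l
      = ∑ e : Equiv.Perm (Fin n),
          (if e w = c then ((Equiv.Perm.sign e : ℤ) : D) * cfW b Fin.succ c e else 0)
            * b w l := by
    intro w
    rw [cfC, Matrix.of_apply, Finset.sum_mul]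
  rw [Finset.sum_congr rfl fun w _ => step1 w, Finset.sum_comm]
  apply Finset.sum_congr rfl
  intro e _
  have hcond : ∀ w : Fin n, (e w = c) = (w = e⁻¹ c) := fun w =>
    propext ⟨fun h => by rw [← h]; simp, fun h => by rw [h]; simp⟩
  simp only [hcond, ite_mul, zero_mul]
  rw [Finset.sum_ite_eq' Finset.univ (e⁻¹ c)
    (fun w => ((Equiv.Perm.sign e : ℤ) : D) * cfW b Fin.succ c e * b w l)]
  simp

end Kernel

section Kernel2

variable {D : Type*} [DivisionRing D] {n : ℕ} (b : Fin n → Fin (n + 1) → D)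
variable (hcomm : ∀ i k : Fin n, i ≠ k → ∀ j l : Fin (n + 1), b i j * b k l = b k l * b i j)

include hcomm in
theorem cfCA (h0 : cartierFoataDet b 0 ≠ 0) :
    cfC b * cfA b = cartierFoataDet b 0 • (1 : Matrix (Fin n) (Fin n) D) := by
  have hsucc0 : Fin.succAbove (0 : Fin (n + 1)) = Fin.succ := by
    funext t; exact Fin.zero_succAbove t
  ext c c'
  rw [Matrix.mul_apply]
  have : ∀ w : Fin n, cfA b w c' = b w (Fin.succ c') := fun w => rfl
  simp only [this]
  rw [cfC_row b hcomm c (Fin.succ c')]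
  rcases eq_or_ne c' c with h | h
  · subst h
    rw [Function.update_eq_self]
    rw [Matrix.smul_apply, Matrix.one_apply_eq]
    rw [cartierFoataDet_eq, hsucc0]
    simp
  · have h1 : Function.update (Fin.succ : Fin n → Fin (n+1)) c (Fin.succ c') c
        = Fin.succ c' := Function.update_self _ _ _
    have h2 : Function.update (Fin.succ : Fin n → Fin (n+1)) c (Fin.succ c') c'
        = Fin.succ c' := by rw [Function.update_of_ne h]
    rw [cfDet_eq_zero_of_repeat b _ c c' (fun hq => h hq.symm) (h1.trans h2.symm)]
    rw [Matrix.smul_apply, Matrix.one_apply_ne (fun hq => h hq.symm)]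
    simp

include hcomm in
theorem kernel_identity (h0 : cartierFoataDet b 0 ≠ 0) (r : Fin n) :
    ∑ l : Fin (n + 1), (-1 : D) ^ (l : ℕ) *
      (b r l * ((cartierFoataDet b 0)⁻¹ * cartierFoataDet b l)) = 0 := by
  set d : D := cartierFoataDet b 0 with hd
  have hsucc0 : Fin.succAbove (0 : Fin (n + 1)) = Fin.succ := by
    funext t; exact Fin.zero_succAbove t
  -- invertibility
  have hBA : (d⁻¹ • cfC b) * cfA b = 1 := by
    rw [Matrix.smul_mul, cfCA b hcomm h0, smul_smul, inv_mul_cancel₀ h0, one_smul]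
  have hAB : cfA b * (d⁻¹ • cfC b) = 1 := matrix_mul_eq_one_comm hBA
  -- the solution vector
  set x : Fin n → D := (d⁻¹ • cfC b).mulVec (fun w => b w 0) with hx
  have hsol : ∀ r' : Fin n, ∑ c : Fin n, b r' (Fin.succ c) * x c = b r' 0 := by
    intro r'
    have := congrFun (congrArg Matrix.mulVec hAB) (fun w => b w 0)
    rw [← Matrix.mulVec_mulVec, Matrix.one_mulVec] at this
    have h2 := congrFun this r'
    rw [Matrix.mulVec, dotProduct] at h2
    exact h2
  -- identification of the solution entries
  have hxval : ∀ c : Fin n, x c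
      = (-1 : D) ^ (c : ℕ) * (d⁻¹ * cartierFoataDet b (Fin.succ c)) := by
    intro c
    have h1 : x c = d⁻¹ * ∑ w : Fin n, cfC b c w * b w 0 := by
      rw [hx, Matrix.mulVec, dotProduct]
      rw [Finset.mul_sum]
      apply Finset.sum_congr rfl
      intro w _
      rw [Matrix.smul_apply, smul_eq_mul, mul_assoc]
    rw [h1, cfC_row b hcomm c 0]
    -- compute cfDet b (update succ c 0)
    have hupd : Function.update (Fin.succ : Fin n → Fin (n+1)) c 0
        = ⇑(Equiv.swap (0 : Fin (n+1)) c.succ) ∘ Fin.succ := by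
      funext t
      rcases eq_or_ne t c with h | h
      · subst h
        rw [Function.update_self, Function.comp_apply, Equiv.swap_apply_right]
      · rw [Function.update_of_ne h, Function.comp_apply,
          Equiv.swap_apply_of_ne_of_ne (Fin.succ_ne_zero t)
            (fun hq => h (Fin.succ_injective _ hq))]
    have hswap0 : Equiv.swap (0 : Fin (n+1)) c.succ 0 = c.succ := Equiv.swap_apply_left _ _
    have hdet : cfDet b (Function.update (Fin.succ : Fin n → Fin (n+1)) c 0)
        = (-1 : D) ^ (c : ℕ) * cartierFoataDet b c.succ := by
      rw [hupd, cfDet_perm_succ, hswap0]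
      rw [Equiv.Perm.sign_swap (fun hq => (Fin.succ_ne_zero c) hq.symm)]
      rw [cartierFoataDet_eq]
      have hv : ((Fin.succ c : Fin (n+1)) : ℕ) = (c : ℕ) + 1 := Fin.val_succ c
      rw [hv, pow_succ]
      push_cast
      rw [← mul_assoc, ← mul_assoc]
      congr 1
      rw [mul_neg_one, neg_one_mul, neg_neg]
    rw [hdet, ← mul_assoc, ← neg_one_pow_comm, mul_assoc]
  -- assemble the kernel identity
  rw [Fin.sum_univ_succ]
  have hterm0 : (-1 : D) ^ ((0 : Fin (n + 1)) : ℕ) * (b r 0 * (d⁻¹ * d)) = b r 0 := by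
    rw [inv_mul_cancel₀ h0, mul_one]
    norm_num
  rw [hterm0]
  have hterms : ∀ c : Fin n, (-1 : D) ^ ((Fin.succ c : Fin (n+1)) : ℕ) *
      (b r (Fin.succ c) * (d⁻¹ * cartierFoataDet b (Fin.succ c)))
      = -(b r (Fin.succ c) * x c) := by
    intro c
    rw [hxval c, Fin.val_succ, pow_succ]
    rw [mul_assoc ((-1 : D) ^ (c : ℕ)), neg_one_mul, mul_neg]
    conv_rhs => rw [← mul_assoc, ← neg_one_pow_comm, mul_assoc]
  rw [Finset.sum_congr rfl fun c _ => hterms c, Finset.sum_neg_distrib]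
  rw [hsol r]
  exact add_neg_cancel _

end Kernel2

section Main

variable {D : Type*} [DivisionRing D] {n : ℕ}

private theorem sign_juggle (k m : ℕ) (X Y : D) :
    (-1 : D) ^ k * ((((-1 : D) ^ k * -1) * ((-1 : D) ^ m * X)) * Y)
      = -((-1 : D) ^ m * (X * Y)) := by
  rcases Nat.even_or_odd k with h | h
  · rw [h.neg_one_pow]
    simp [mul_assoc]
  · rw [h.neg_one_pow]
    simp [mul_assoc]

theorem triangle_relation_of_CartierFoata_minors'
    (b : Fin n → Fin (n + 1) → D)
    (hcomm : ∀ i k : Fin n, i ≠ k → ∀ j l : Fin (n + 1),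
      b i j * b k l = b k l * b i j)
    (h0 : cartierFoataDet b 0 ≠ 0) :
    ∀ i j : Fin (n + 1),
      cartierFoataDet b i * (cartierFoataDet b 0)⁻¹ * cartierFoataDet b j =
        cartierFoataDet b j * (cartierFoataDet b 0)⁻¹ * cartierFoataDet b i := by
  intro i j
  rcases eq_or_ne i j with rfl | hij
  · rfl
  obtain ⟨p, hp⟩ := Fin.exists_succAbove_eq (show j ≠ i from hij.symm)
  set d : D := cartierFoataDet b 0 with hd
  set f : Fin (n + 1) → D := fun l =>
    (-1 : D) ^ (l : ℕ) * (cfDet b (Function.update (Fin.succAbove i) p l) *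
      (d⁻¹ * cartierFoataDet b l)) with hf
  -- Claim A : the sum vanishes by the kernel identity
  have claimA : ∑ l : Fin (n + 1), f l = 0 := by
    have hexp : ∀ l : Fin (n + 1), f l = ∑ e : Equiv.Perm (Fin n),
        (((Equiv.Perm.sign e : ℤ) : D) * cfW b (Fin.succAbove i) p e) *
          ((-1 : D) ^ (l : ℕ) * (b (e⁻¹ p) l * (d⁻¹ * cartierFoataDet b l))) := by
      intro l
      rw [hf]
      simp only []
      rw [cfDet_update b hcomm (Fin.succAbove i) p l, Finset.sum_mul, Finset.mul_sum]
      apply Finset.sum_congr rfl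
      intro e _
      set T : D := ((Equiv.Perm.sign e : ℤ) : D) * cfW b (Fin.succAbove i) p e with hT
      rw [mul_assoc T, ← mul_assoc ((-1 : D) ^ (l : ℕ)), neg_one_pow_comm T,
        mul_assoc T]
    rw [Finset.sum_congr rfl fun l _ => hexp l, Finset.sum_comm]
    apply Finset.sum_eq_zero
    intro e _
    rw [← Finset.mul_sum, kernel_identity b hcomm h0 (e⁻¹ p), mul_zero]
  -- Claim B : only the terms l = i and l = j survive
  have hvanish : ∀ l : Fin (n + 1), l ∉ ({i, j} : Finset (Fin (n + 1))) → f l = 0 := by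
    intro l hl
    rw [Finset.mem_insert, Finset.mem_singleton] at hl
    push_neg at hl
    obtain ⟨hli, hlj⟩ := hl
    obtain ⟨p', hp'⟩ := Fin.exists_succAbove_eq (show l ≠ i from hli)
    have hpp' : p ≠ p' := by
      intro hq
      exact hlj (by rw [← hp', ← hq, hp])
    have hzero : cfDet b (Function.update (Fin.succAbove i) p l) = 0 := by
      apply cfDet_eq_zero_of_repeat b _ p p' hpp'
      rw [Function.update_self, Function.update_of_ne (Ne.symm hpp'), hp']
    rw [hf]
    simp only []
    rw [hzero, zero_mul, mul_zero]
  have hsplit : ∑ l : Fin (n + 1), f l = f i + f j := by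
    rw [← Finset.sum_pair hij]
    exact (Finset.sum_subset (Finset.subset_univ _)
      (fun l _ hl => hvanish l hl)).symm
  -- the term l = j
  have hfj : f j = (-1 : D) ^ (j : ℕ) *
      (cartierFoataDet b i * (d⁻¹ * cartierFoataDet b j)) := by
    rw [hf]
    simp only []
    rw [← hp, Function.update_eq_self, ← cartierFoataDet_eq, hp]
  -- the term l = i
  have hfi : f i = -((-1 : D) ^ (j : ℕ) *
      (cartierFoataDet b j * (d⁻¹ * cartierFoataDet b i))) := by
    set σ : Equiv.Perm (Fin (n + 1)) :=
      (Fin.cycleRange i)⁻¹ * Equiv.swap 0 p.succ with hσ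
    have hupd : Function.update (Fin.succAbove i) p i = ⇑σ ∘ Fin.succ := by
      funext t
      rw [Function.comp_apply, hσ, Equiv.Perm.mul_apply]
      rcases eq_or_ne t p with h | h
      · subst h
        rw [Equiv.swap_apply_right, Function.update_self, eq_comm,
          Equiv.Perm.inv_eq_iff_eq, Fin.cycleRange_self]
      · rw [Equiv.swap_apply_of_ne_of_ne (Fin.succ_ne_zero t)
          (fun hq => h (Fin.succ_injective _ hq)), Function.update_of_ne h, eq_comm,
          Equiv.Perm.inv_eq_iff_eq, Fin.cycleRange_succAbove]
    have hσ0 : σ 0 = j := by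
      rw [hσ, Equiv.Perm.mul_apply, Equiv.swap_apply_left, Equiv.Perm.inv_eq_iff_eq,
        ← hp, Fin.cycleRange_succAbove]
    have hsign : ((Equiv.Perm.sign σ : ℤ) : D) = (-1 : D) ^ (i : ℕ) * -1 := by
      rw [hσ, signD_mul]
      rw [map_inv, Fin.sign_cycleRange]
      rw [Equiv.Perm.sign_swap (Ne.symm (Fin.succ_ne_zero p))]
      push_cast
      simp
    have hdet : cfDet b (Function.update (Fin.succAbove i) p i)
        = ((-1 : D) ^ (i : ℕ) * -1) * ((-1 : D) ^ (j : ℕ) * cartierFoataDet b j) := by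
      rw [hupd, cfDet_perm_succ, hσ0, hsign, ← cartierFoataDet_eq]
    rw [hf]
    simp only []
    rw [hdet]
    exact sign_juggle (i : ℕ) (j : ℕ) (cartierFoataDet b j)
      (d⁻¹ * cartierFoataDet b i)
  -- combine
  have hkey : (-1 : D) ^ (j : ℕ) * (cartierFoataDet b i * (d⁻¹ * cartierFoataDet b j))
      = (-1 : D) ^ (j : ℕ) * (cartierFoataDet b j * (d⁻¹ * cartierFoataDet b i)) := by
    have h1 : f i + f j = 0 := by rw [← hsplit, claimA]
    rw [hfi, hfj] at h1
    have h2 := add_eq_zero_iff_eq_neg.mp h1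
    exact (neg_inj.mp h2).symm
  have hcancel := mul_left_cancel₀
    (pow_ne_zero (j : ℕ) (neg_ne_zero.mpr (one_ne_zero : (1 : D) ≠ 0))) hkey
  rw [mul_assoc, mul_assoc]
  exact hcancel

end Main

theorem triangle_relation_of_CartierFoata_minors
    {D : Type*} [DivisionRing D] (n : ℕ) (hn : 2 ≤ n)
    (b : Fin n → Fin (n + 1) → D)
    (hcomm : ∀ i k : Fin n, i ≠ k → ∀ j l : Fin (n + 1),
      b i j * b k l = b k l * b i j)
    (h0 : cartierFoataDet b 0 ≠ 0) :
    ∀ i j : Fin (n + 1),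
      cartierFoataDet b i * (cartierFoataDet b 0)⁻¹ * cartierFoataDet b j =
        cartierFoataDet b j * (cartierFoataDet b 0)⁻¹ * cartierFoataDet b i :=
  triangle_relation_of_CartierFoata_minors' b hcomm h0
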